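/- Let G be a finite connected simple graph and s a vertex with eccentricity e(s) = max_v dist(s,v). Under threshold-1 Greenberg–Hastings dynamics started from the configuration in which s is excited and every other vertex is resting, every vertex is resting at every time t ≥ e(s) + 2. (A single excitation wave annihilates after reaching the boundary of the graph.) -/

import Mathlib

/-- The three states of a Greenberg–Hastings excitable automaton node. -/
inductive GHState where
  | resting : GHState
  | excited : GHState
  | refractory : GHState
deriving DecidableEq

open GHState

/-- Number of excited neighbours of `v` in configuration `c`. -/
def excitedCount {V : Type*} (G : SimpleGraph V) [Fintype V] [DecidableRel G.Adj]
    (c : V → GHState) (v : V) : ℕ :=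
  ((G.neighborFinset v).filter (fun u => c u = excited)).card

/-- Greenberg–Hastings update map `F_S`: a resting vertex becomes excited iff its
number of excited neighbours lies in `S`; an excited vertex becomes refractory;
a refractory vertex becomes resting. -/
def ghStep {V : Type*} (G : SimpleGraph V) [Fintype V] [DecidableRel G.Adj]
    (S : Set ℕ) [DecidablePred (· ∈ S)] (c : V → GHState) : V → GHState :=
  fun v =>
    match c v with
    | resting => if excitedCount G c v ∈ S then excited else resting
    | excited => refractory
    | refractory => resting

/-!
By induction on `t`, the configuration at time `t` is the wave front: exactly the vertices
at distance `t` from `s` are excited and those at distance `t - 1` are refractory. A resting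
vertex at distance `d` is excited next iff it has a neighbour at distance `t`; since neighbours
differ in distance by at most one and the refractory shell at distance `t - 1` blocks the way
back, this happens iff `d = t + 1`. Once `t` exceeds `e(s) + 1` both shells are empty.
-/

namespace SimpleGraph

variable {V : Type*} {G : SimpleGraph V}

lemma exists_adj_dist_eq_of_dist_eq_add_one {u v : V} {k : ℕ} (h : G.dist u v = k + 1) :
    ∃ w, G.Adj w v ∧ G.dist u w = k := by
  obtain ⟨p, hp⟩ := exists_walk_of_dist_ne_zero (G := G) (u := v) (v := u)
    (by rw [dist_comm, h]; omega)
  rw [dist_comm, h] at hp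
  cases p with
  | nil => simp at hp
  | @cons _ w _ hadj q =>
    refine ⟨w, hadj.symm, le_antisymm ?_ ?_⟩
    · rw [dist_comm]
      exact (dist_le q).trans (by simp only [Walk.length_cons] at hp; omega)
    · have := q.reachable.symm.dist_triangle_left v
      rw [dist_eq_one_iff_adj.mpr hadj.symm] at this
      omega

end SimpleGraph

section Wave

variable {V : Type*} (G : SimpleGraph V)

noncomputable def waveConfig (s : V) (t : ℕ) : V → GHState := fun v =>
  if G.dist s v = t then excited else if G.dist s v + 1 = t then refractory else resting

lemma waveConfig_eq_excited_iff {s v : V} {t : ℕ} :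
    waveConfig G s t v = excited ↔ G.dist s v = t := by
  unfold waveConfig
  split_ifs <;> simp_all

lemma excitedCount_pos_iff [Fintype V] [DecidableRel G.Adj] {c : V → GHState} {v : V} :
    0 < excitedCount G c v ↔ ∃ w, G.Adj v w ∧ c w = excited := by
  simp [excitedCount, Finset.card_pos, Finset.Nonempty]

lemma exists_adj_dist_eq_iff {s v : V} {t : ℕ} (hv : G.dist s v ≠ t)
    (hv' : G.dist s v + 1 ≠ t) : (∃ w, G.Adj v w ∧ G.dist s w = t) ↔ G.dist s v = t + 1 := by
  constructor
  · rintro ⟨w, hadj, rfl⟩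
    rcases hadj.diff_dist_adj (u := s) with h | h | h <;> omega
  · intro h
    obtain ⟨w, hadj, hw⟩ := G.exists_adj_dist_eq_of_dist_eq_add_one h
    exact ⟨w, hadj.symm, hw⟩

lemma ghStep_waveConfig [Fintype V] [DecidableRel G.Adj] (s : V) (t : ℕ) :
    ghStep G {n | 1 ≤ n} (waveConfig G s t) = waveConfig G s (t + 1) := by
  funext v
  by_cases hexc : G.dist s v = t
  · simp [ghStep, waveConfig, hexc]
  by_cases href : G.dist s v + 1 = t
  · simp [ghStep, waveConfig, hexc, href, show G.dist s v ≠ t + 1 by omega]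
  have hrest : waveConfig G s t v = resting := by simp [waveConfig, hexc, href]
  have hnext : 0 < excitedCount G (waveConfig G s t) v ↔ G.dist s v = t + 1 := by
    simpa only [excitedCount_pos_iff, waveConfig_eq_excited_iff] using
      exists_adj_dist_eq_iff G hexc href
  simp only [ghStep, hrest, Set.mem_ofPred_eq, Nat.one_le_iff_ne_zero, ← Nat.pos_iff_ne_zero,
    hnext]
  simp only [waveConfig, show G.dist s v + 1 ≠ t + 1 by omega, if_false]

lemma iterate_ghStep_single_eq_waveConfig [Fintype V] [DecidableEq V] [DecidableRel G.Adj]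
    (hconn : G.Connected) (s : V) (t : ℕ) :
    (ghStep G {n | 1 ≤ n})^[t] (fun u => if u = s then excited else resting) =
      waveConfig G s t := by
  induction t with
  | zero =>
    funext v
    simp [waveConfig, hconn.dist_eq_zero_iff, eq_comm]
  | succ t ih => rw [Function.iterate_succ_apply', ih, ghStep_waveConfig]

end Wave

/-- Under threshold-1 Greenberg–Hastings dynamics started from a single excited
vertex `s` (all other vertices resting), every vertex is resting at every time
`t ≥ e(s) + 2`, where `e(s) = max_v dist(s,v)` is the eccentricity of `s`:
a single excitation wave annihilates after reaching the boundary of the graph. -/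
theorem single_wave_annihilates {V : Type*} (G : SimpleGraph V)
    [Fintype V] [DecidableEq V] [DecidableRel G.Adj]
    (hconn : G.Connected) (s : V) :
    ∀ t : ℕ, (Finset.univ.sup (fun v => G.dist s v)) + 2 ≤ t →
      ∀ v : V,
        (ghStep G {n : ℕ | 1 ≤ n})^[t] (fun u => if u = s then excited else resting) v
          = resting := by
  intro t ht v
  have hv : G.dist s v ≤ Finset.univ.sup (fun v => G.dist s v) :=
    Finset.le_sup (Finset.mem_univ v)
  rw [iterate_ghStep_single_eq_waveConfig G hconn s t, waveConfig,
    if_neg (by omega), if_neg (by omega)]
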